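/- arXiv:math/9912177 — 8 statements merged into one kernel-verified Lean document; each statement's English description precedes it below -/
import Mathlib

section
/- Let G be a simple graph on a vertex type V which is a tree (connected and acyclic), locally finite, and such that every vertex of G has degree at least 3. Then G has infinitely many ends. -/
open SimpleGraph CategoryTheory Opposite

namespace TreeEndsAux

variable {V : Type} {G : SimpleGraph V}

lemma tree_sep (hG : G.IsAcyclic) {u w1 w2 : V} (h1 : G.Adj u w1) (h2 : G.Adj u w2)
    (hne : w1 ≠ w2) (p : G.Walk w1 w2) (hu : u ∉ p.support) : False := by
  classical
  have hq : u ∉ p.toPath.val.support := fun h => hu (Walk.support_toPath_subset p h)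
  have hp1 : (Walk.cons h1 p.toPath.val).IsPath := by
    rw [Walk.cons_isPath_iff]; exact ⟨p.toPath.prop, hq⟩
  have heq := (isAcyclic_iff_path_unique.mp hG) ⟨Walk.cons h1 p.toPath.val, hp1⟩
    (Path.singleton h2)
  have hsup := congrArg (fun q : G.Path u w2 => q.val.support) heq
  simp only [Path.singleton, Walk.support_cons] at hsup
  rw [p.toPath.val.support_eq_cons] at hsup
  simp only [Walk.support_nil, List.cons.injEq] at hsup
  exact hne hsup.2.1

lemma walk_down {s : Set V} {a b : ↥s} (q : (G.induce s).Walk a b) :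
    ∃ p : G.Walk a.val b.val, ∀ x ∈ p.support, x ∈ s := by
  induction q with
  | nil => exact ⟨Walk.nil, by rintro x hx; simp only [Walk.support_nil, List.mem_singleton] at hx; subst hx; exact Subtype.prop _⟩
  | @cons a b c hab q ih =>
    obtain ⟨p, hp⟩ := ih
    have hadj : G.Adj a.val b.val := hab
    refine ⟨Walk.cons hadj p, ?_⟩
    rintro x hx
    rw [Walk.support_cons, List.mem_cons] at hx
    rcases hx with rfl | hx
    · exact a.prop
    · exact hp x hx


lemma walk_of_mk_eq {K : Set V} {v w : V} (hv : v ∉ K) (hw : w ∉ K)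
    (h : G.componentComplMk hv = G.componentComplMk hw) :
    ∃ p : G.Walk v w, ∀ x ∈ p.support, x ∉ K := by
  obtain ⟨q⟩ : (G.induce Kᶜ).Reachable ⟨v, hv⟩ ⟨w, hw⟩ := ConnectedComponent.eq.mp h
  exact walk_down q


lemma walk_up {s : Set V} {v w : V} (p : G.Walk v w) (hp : ∀ x ∈ p.support, x ∈ s) :
    (G.induce s).Reachable ⟨v, hp v p.start_mem_support⟩ ⟨w, hp w p.end_mem_support⟩ := by
  induction p with
  | nil => rfl
  | @cons a b c h q ih =>
    have hb : b ∈ s := hp b (by simp [Walk.support_cons, q.start_mem_support])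
    have h1 : (G.induce s).Adj ⟨a, hp a (by simp [Walk.support_cons])⟩ ⟨b, hb⟩ := by
      simp [h]
    exact h1.reachable.trans (ih (fun x hx => hp x (by simp [Walk.support_cons, hx])))

def Conn (G : SimpleGraph V) (K : Set V) : Prop :=
  ∀ ⦃k1⦄, k1 ∈ K → ∀ ⦃k2⦄, k2 ∈ K → ∃ p : G.Walk k1 k2, ∀ x ∈ p.support, x ∈ K


lemma unique_nbr (hG : G.IsAcyclic) {K : Set V} (hc : Conn G K) {u k1 k2 : V} (hu : u ∉ K)
    (h1 : k1 ∈ K) (h2 : k2 ∈ K) (a1 : G.Adj u k1) (a2 : G.Adj u k2) : k1 = k2 := by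
  by_contra hne
  obtain ⟨p, hp⟩ := hc h1 h2
  exact tree_sep hG a1 a2 hne p (fun h => hu (hp u h))

lemma conn_singleton (v : V) : Conn G {v} := by
  rintro k1 h1 k2 h2
  simp only [Set.mem_singleton_iff] at h1 h2
  subst h1; subst h2
  exact ⟨Walk.nil, by simp⟩

lemma conn_insert {K : Set V} (hc : Conn G K) {u k : V} (hk : k ∈ K) (a : G.Adj u k) :
    Conn G (insert u K) := by
  have hwu : ∀ ⦃k2⦄, k2 ∈ K → ∃ p : G.Walk u k2, ∀ x ∈ p.support, x ∈ insert u K := by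
    intro k2 h2
    obtain ⟨p, hp⟩ := hc hk h2
    refine ⟨Walk.cons a p, ?_⟩
    intro x hx
    rw [Walk.support_cons, List.mem_cons] at hx
    rcases hx with rfl | hx
    · exact Set.mem_insert _ _
    · exact Set.mem_insert_of_mem _ (hp x hx)
  rintro k1 h1 k2 h2
  rcases Set.mem_insert_iff.mp h1 with he1 | h1'
  · subst he1
    rcases Set.mem_insert_iff.mp h2 with he2 | h2'
    · subst he2; exact ⟨Walk.nil, by simp⟩
    · exact hwu h2'
  · rcases Set.mem_insert_iff.mp h2 with he2 | h2'
    · subst he2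
      obtain ⟨p, hp⟩ := hwu h1'
      exact ⟨p.reverse, by simpa [Walk.support_reverse] using hp⟩
    · obtain ⟨p, hp⟩ := hc h1' h2'
      exact ⟨p, fun x hx => Set.mem_insert_of_mem _ (hp x hx)⟩


lemma mk_ne (hG : G.IsAcyclic) {K : Set V} {u w1 w2 : V} (a1 : G.Adj u w1) (a2 : G.Adj u w2)
    (hne : w1 ≠ w2) (hu : u ∈ K) (h1 : w1 ∉ K) (h2 : w2 ∉ K) :
    G.componentComplMk h1 ≠ G.componentComplMk h2 := by
  intro h
  obtain ⟨p, hp⟩ := walk_of_mk_eq h1 h2 h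
  exact tree_sep hG a1 a2 hne p (fun hub => hp u hub hu)


lemma deg_irrel {W : Type} (H : SimpleGraph W) (v : W) (i j : Fintype (H.neighborSet v)) :
    @SimpleGraph.degree W H v i = @SimpleGraph.degree W H v j := by
  rw [Subsingleton.elim i j]


lemma infinite_V [∀ v : V, Fintype (G.neighborSet v)] (htree : G.IsTree)
    (hdeg : ∀ v : V, 3 ≤ G.degree v) : Infinite V := by
  classical
  by_contra hinf
  rw [not_infinite_iff_finite] at hinf
  haveI : Fintype V := Fintype.ofFinite V
  have hcard := htree.card_edgeFinset
  have h3 : 3 * Fintype.card V ≤ 2 * G.edgeFinset.card := by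
    calc 3 * Fintype.card V = ∑ _v : V, 3 := by
          rw [Finset.sum_const, smul_eq_mul, Finset.card_univ, Nat.mul_comm]
      _ ≤ ∑ v : V, @SimpleGraph.degree V G v (G.neighborSetFintype v) :=
          Finset.sum_le_sum (fun v _ => le_trans (hdeg v) (le_of_eq (deg_irrel G v _ _)))
      _ = 2 * G.edgeFinset.card := G.sum_degrees_eq_twice_card_edges
  omega

lemma supp_of_walk {K : Set V} {v w : V} (p : G.Walk v w) (hp : ∀ x ∈ p.support, x ∉ K)
    (hv : v ∉ K) :
    ∀ x ∈ p.support, ∃ hx : x ∉ K, G.componentComplMk hx = G.componentComplMk hv := by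
  induction p with
  | nil =>
    intro x hx; simp only [Walk.support_nil, List.mem_singleton] at hx; subst hx; exact ⟨hv, rfl⟩
  | @cons a b c h q ih =>
    intro x hx
    rw [Walk.support_cons, List.mem_cons] at hx
    rcases hx with rfl | hx
    · exact ⟨hv, rfl⟩
    · have hb : b ∉ K := hp b (by simp [q.start_mem_support])
      obtain ⟨hxK, he⟩ := ih (fun y hy => hp y (by simp [hy])) hb x hx
      exact ⟨hxK, he.trans (G.componentComplMk_eq_of_adj hb hv h.symm)⟩


lemma induce_acyclic (hG : G.IsAcyclic) (s : Set V) : (G.induce s).IsAcyclic := by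
  rw [isAcyclic_iff_path_unique]
  intro v w p q
  exact SimpleGraph.Path.map_injective (f := ((SimpleGraph.Embedding.induce s : G.induce s ↪g G)).toHom)
    (SimpleGraph.Embedding.induce s : G.induce s ↪g G).injective v w
    (hG.path_unique (p.map _ _) (q.map _ _))


lemma comp_infinite [∀ v : V, Fintype (G.neighborSet v)] (htree : G.IsTree)
    (hdeg : ∀ v : V, 3 ≤ G.degree v) {K : Finset V} (hc : Conn G ↑K)
    (C : G.ComponentCompl (↑K : Set V)) : C.supp.Infinite := by
  classical
  by_contra hfin
  rw [Set.not_infinite] at hfin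
  haveI : Fintype C.supp := hfin.fintype
  -- the induced graph on the component is connected
  have hconn : (G.induce C.supp).Connected := by
    rw [connected_iff]
    refine ⟨fun v w => ?_, ⟨⟨C.nonempty.choose, C.nonempty.choose_spec⟩⟩⟩
    obtain ⟨v, hv⟩ := v; obtain ⟨w, hw⟩ := w
    obtain ⟨hvK, hveq⟩ := hv
    obtain ⟨hwK, hweq⟩ := hw
    obtain ⟨p, hp⟩ := walk_of_mk_eq hvK hwK (hveq.trans hweq.symm)
    have hsupp : ∀ x ∈ p.support, x ∈ C.supp := by
      intro x hx
      obtain ⟨hxK, hxeq⟩ := supp_of_walk p hp hvK x hx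
      exact ⟨hxK, hxeq.trans hveq⟩
    exact walk_up p hsupp
  have htreeC : (G.induce C.supp).IsTree := ⟨hconn, induce_acyclic htree.2 _⟩
  -- every vertex of the component has at least two neighbors inside it
  have hdeg2 : ∀ x : C.supp,
      2 ≤ @SimpleGraph.degree _ (G.induce C.supp) x ((G.induce C.supp).neighborSetFintype x) := by
    rintro ⟨x, hx⟩
    have hxK : x ∉ (↑K : Set V) := hx.choose
    have hxC : x ∈ C := hx
    set N : Finset V := G.neighborFinset x with hN
    have hNcard : 3 ≤ N.card := hdeg x
    have hNK : (N ∩ K).card ≤ 1 := by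
      rw [Finset.card_le_one]
      intro a ha b hb
      rw [Finset.mem_inter, mem_neighborFinset] at ha hb
      exact unique_nbr htree.2 hc hxK ha.2 hb.2 ha.1 hb.1
    have h2 : 2 ≤ (N \ K).card := by
      have hle := Finset.le_card_sdiff (N ∩ K) N
      rw [Finset.sdiff_inter_self_left] at hle
      omega
    -- inject `N \ K` into the neighbor set within the component
    have hmem : ∀ y ∈ N \ K, y ∈ C.supp := by
      intro y hy
      rw [Finset.mem_sdiff, mem_neighborFinset] at hy
      exact ComponentCompl.mem_of_adj x y hxC (by exact_mod_cast hy.2) hy.1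
    have hinj : ∃ f : ↥(N \ K : Finset V) → ((G.induce C.supp).neighborSet ⟨x, hx⟩),
        Function.Injective f := by
      refine ⟨fun y => ⟨⟨y.val, hmem y.val y.prop⟩, ?_⟩, ?_⟩
      · have := (Finset.mem_sdiff.mp y.prop).1
        rw [mem_neighborFinset] at this
        simpa using this
      · rintro ⟨y, hy⟩ ⟨z, hz⟩ hyz
        simp only [Subtype.mk_eq_mk] at hyz ⊢
        exact hyz
    obtain ⟨f, hf⟩ := hinj
    calc 2 ≤ (N \ K).card := h2
      _ = Fintype.card ↥(N \ K : Finset V) := (Fintype.card_coe _).symm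
      _ ≤ Fintype.card ((G.induce C.supp).neighborSet ⟨x, hx⟩) := Fintype.card_le_of_injective f hf
      _ = _ := card_neighborSet_eq_degree _ _
  -- edge counting in the finite tree on the component
  have hcard := htreeC.card_edgeFinset
  have h0 : 1 ≤ Fintype.card C.supp := Fintype.card_pos_iff.mpr htreeC.1.nonempty
  have h3 : 2 * Fintype.card C.supp ≤ 2 * (G.induce C.supp).edgeFinset.card := by
    calc 2 * Fintype.card C.supp = ∑ _v : C.supp, 2 := by
          rw [Finset.sum_const, smul_eq_mul, Finset.card_univ, Nat.mul_comm]
      _ ≤ ∑ v : C.supp, @SimpleGraph.degree _ (G.induce C.supp) v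
            ((G.induce C.supp).neighborSetFintype v) :=
          Finset.sum_le_sum (fun v _ => hdeg2 v)
      _ = 2 * (G.induce C.supp).edgeFinset.card := sum_degrees_eq_twice_card_edges _
  omega

lemma exists_K [∀ v : V, Fintype (G.neighborSet v)] [Infinite V] (htree : G.IsTree)
    (hdeg : ∀ v : V, 3 ≤ G.degree v) (n : ℕ) :
    ∃ K : Finset V, K.Nonempty ∧ Conn G ↑K ∧
      ∃ f : Fin n → G.ComponentCompl (↑K : Set V), Function.Injective f := by
  classical
  induction n with
  | zero =>
    obtain ⟨v⟩ := htree.1.nonempty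
    exact ⟨{v}, Finset.singleton_nonempty v, by simpa using conn_singleton v,
      fun i => i.elim0, fun i => i.elim0⟩
  | succ n ih =>
    obtain ⟨K, hne, hc, f, hf⟩ := ih
    obtain ⟨C⟩ : Nonempty (G.ComponentCompl (↑K : Set V)) :=
      G.componentCompl_nonempty_of_infinite K
    obtain ⟨⟨u, k⟩, huC, hkK, hadj⟩ :=
      C.exists_adj_boundary_pair htree.1.preconnected (Finset.coe_nonempty.mpr hne)
    have hunK : u ∉ (↑K : Set V) := ComponentCompl.notMem_of_mem huC
    set K' : Finset V := insert u K with hK'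
    have hcoe : (↑K' : Set V) = insert u (↑K : Set V) := by simp [hK']
    have hsub : (↑K : Set V) ⊆ ↑K' := by rw [hcoe]; exact Set.subset_insert _ _
    have hc' : Conn G ↑K' := by rw [hcoe]; exact conn_insert hc hkK hadj
    have hne' : K'.Nonempty := ⟨u, Finset.mem_insert_self _ _⟩
    -- two neighbors of u outside K'
    have hNK : (G.neighborFinset u ∩ K).card ≤ 1 := by
      rw [Finset.card_le_one]
      intro a ha b hb
      rw [Finset.mem_inter, mem_neighborFinset] at ha hb
      exact unique_nbr htree.2 hc hunK ha.2 hb.2 ha.1 hb.1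
    have h2 : 1 < (G.neighborFinset u \ K).card := by
      have hle := Finset.le_card_sdiff (G.neighborFinset u ∩ K) (G.neighborFinset u)
      rw [Finset.sdiff_inter_self_left] at hle
      have := hdeg u
      rw [← card_neighborFinset_eq_degree] at this
      omega
    obtain ⟨w1, hw1, w2, hw2, hww⟩ := Finset.one_lt_card.mp h2
    rw [Finset.mem_sdiff, mem_neighborFinset] at hw1 hw2
    have hw1K' : w1 ∉ (↑K' : Set V) := by
      rw [hcoe]
      simp only [Set.mem_insert_iff]
      push_neg
      exact ⟨fun h => G.irrefl (h ▸ hw1.1), by exact_mod_cast hw1.2⟩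
    have hw2K' : w2 ∉ (↑K' : Set V) := by
      rw [hcoe]
      simp only [Set.mem_insert_iff]
      push_neg
      exact ⟨fun h => G.irrefl (h ▸ hw2.1), by exact_mod_cast hw2.2⟩
    have huK' : u ∈ (↑K' : Set V) := by rw [hcoe]; exact Set.mem_insert _ _
    have hD12 : G.componentComplMk hw1K' ≠ G.componentComplMk hw2K' :=
      mk_ne htree.2 hw1.1 hw2.1 hww huK' hw1K' hw2K'
    have hw1C : w1 ∈ C := ComponentCompl.mem_of_adj u w1 huC (by exact_mod_cast hw1.2) hw1.1
    have hw2C : w2 ∈ C := ComponentCompl.mem_of_adj u w2 huC (by exact_mod_cast hw2.2) hw2.1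
    have hhom1 : (G.componentComplMk hw1K').hom hsub = C := by
      rw [ComponentCompl.hom_mk]
      exact hw1C.choose_spec
    have hhom2 : (G.componentComplMk hw2K').hom hsub = C := by
      rw [ComponentCompl.hom_mk]
      exact hw2C.choose_spec
    have hsur : Function.Surjective (fun D : G.ComponentCompl (↑K' : Set V) => D.hom hsub) := by
      intro D
      by_cases hDC : D = C
      · exact ⟨G.componentComplMk hw1K', by simpa using hhom1.trans hDC.symm⟩
      · obtain ⟨x, hxK, hmk⟩ := D.exists_eq_mk
        have hxu : x ≠ u := by
          rintro rfl
          exact hDC (hmk.symm.trans huC.choose_spec)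
        have hxK' : x ∉ (↑K' : Set V) := by
          rw [hcoe]; simp only [Set.mem_insert_iff]; push_neg; exact ⟨hxu, hxK⟩
        exact ⟨G.componentComplMk hxK', by simp only; rw [ComponentCompl.hom_mk]; exact hmk⟩
    set sec := Function.surjInv hsur with hsecdef
    have hsecinj : Function.Injective sec := Function.injective_surjInv hsur
    have hsecval : ∀ D, (sec D).hom hsub = D := fun D => Function.rightInverse_surjInv hsur D
    have key : ∀ E : G.ComponentCompl (↑K' : Set V), E.hom hsub = C →
        ∀ b, sec b = E → b = C := by
      intro E hE b hb
      rw [← hb, hsecval b] at hE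
      exact hE
    have hpick : ∃ E, E.hom hsub = C ∧ E ∉ Set.range sec := by
      by_cases h1 : G.componentComplMk hw1K' = sec C
      · refine ⟨G.componentComplMk hw2K', hhom2, ?_⟩
        rintro ⟨b, hb⟩
        have hbC := key _ hhom2 b hb
        subst hbC
        exact hD12 (h1.trans hb)
      · refine ⟨G.componentComplMk hw1K', hhom1, ?_⟩
        rintro ⟨b, hb⟩
        have hbC := key _ hhom1 b hb
        subst hbC
        exact h1 hb.symm
    obtain ⟨E, hEC, hErange⟩ := hpick
    refine ⟨K', hne', hc', Fin.cons E (sec ∘ f), ?_⟩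
    intro i j hij
    rcases Fin.eq_zero_or_eq_succ i with rfl | ⟨i', rfl⟩ <;>
      rcases Fin.eq_zero_or_eq_succ j with rfl | ⟨j', rfl⟩
    · rfl
    · rw [Fin.cons_zero, Fin.cons_succ] at hij
      exact absurd ⟨f j', hij.symm⟩ hErange
    · rw [Fin.cons_zero, Fin.cons_succ] at hij
      exact absurd ⟨f i', hij⟩ hErange
    · rw [Fin.cons_succ, Fin.cons_succ] at hij
      exact congrArg Fin.succ (hf (hsecinj hij))

lemma exists_end [LocallyFinite G] [Fact G.Preconnected] [Infinite V] {K : Finset V}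
    (C : G.ComponentCompl (↑K : Set V)) (hC : C.supp.Infinite) :
    ∃ e : G.end, e.val (op K) = C := by
  classical
  set F := G.componentComplFunctor with hF
  have hML : F.IsMittagLeffler :=
    F.isMittagLeffler_of_exists_finite_range (fun j => ⟨j, 𝟙 j, Set.toFinite _⟩)
  haveI : ∀ j, Nonempty (F.obj j) := fun j => G.componentCompl_nonempty_of_infinite j.unop
  haveI : ∀ j, Finite (F.obj j) := fun j => G.componentCompl_finite j.unop
  haveI : ∀ j, Nonempty (F.toEventualRanges.obj j) := fun j => F.toEventualRanges_nonempty hML j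
  have hC' : C ∈ F.eventualRange (op K) := (G.infinite_iff_in_eventualRange C).mp hC
  obtain ⟨sec, hsec⟩ := F.toEventualRanges.eval_section_surjective_of_surjective
    (F.surjective_toEventualRanges hML) (op K) ⟨C, hC'⟩
  refine ⟨F.toEventualRangesSectionsEquiv sec, ?_⟩
  have : (F.toEventualRangesSectionsEquiv sec).val (op K) = (sec.val (op K)).val := rfl
  rw [this]
  exact congrArg Subtype.val hsec

end TreeEndsAux

open TreeEndsAux Opposite

/-- A locally finite tree in which every vertex has degree at least 3 has
infinitely many ends. -/
theorem tree_min_degree_three_infinite_ends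
    {V : Type} (G : SimpleGraph V) [∀ v : V, Fintype (G.neighborSet v)]
    (htree : G.IsTree) (hdeg : ∀ v : V, 3 ≤ G.degree v) :
    Infinite G.end := by
  classical
  haveI : Infinite V := infinite_V htree hdeg
  haveI : Fact G.Preconnected := ⟨htree.1.preconnected⟩
  by_contra hfin
  rw [not_infinite_iff_finite] at hfin
  obtain ⟨K, hne, hc, f, hf⟩ := exists_K htree hdeg (Nat.card G.end + 1)
  have hends : ∀ i, ∃ e : G.end, e.val (op K) = f i := fun i =>
    exists_end (f i) (comp_infinite htree hdeg hc (f i))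
  choose g hg using hends
  have hginj : Function.Injective g := by
    intro i j hij
    apply hf
    rw [← hg i, ← hg j, hij]
  have hle := Nat.card_le_card_of_injective g hginj
  simp only [Nat.card_eq_fintype_card, Fintype.card_fin] at hle
  omega
end

section
/- Let λ : [0,∞) → [0,∞) be continuously differentiable and let χ : [0,∞) → ℝ satisfy χ(r) ≤ 1 for all r ≥ 0. Suppose that for every R > 0 one has (2/R)·∫₀^R (1 − r/R)·λ'(r) dr ≤ (1/R²)·∫₀^R λ(r) dr + (2/R)·∫₀^R (1 − r/R)·χ(r) dr. Then for every R > 0, ∫₀^R λ(r) dr ≤ R² + 2·λ(0)·R. -/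
open Set MeasureTheory intervalIntegral

/-- Quadratic area growth from the Gauss–Bonnet inequality: if
`λ : [0,∞) → [0,∞)` is `C¹`, `χ ≤ 1` on `[0,∞)`, and for every `R > 0`
`(2/R)·∫₀^R (1 − r/R)·λ'(r) dr ≤ (1/R²)·∫₀^R λ(r) dr + (2/R)·∫₀^R (1 − r/R)·χ(r) dr`,
then `∫₀^R λ(r) dr ≤ R² + 2·λ(0)·R` for every `R > 0`. -/
theorem area_growth_quadratic
    (lam lam' chi : ℝ → ℝ)
    (hlam_deriv : ∀ r ∈ Set.Ici (0 : ℝ), HasDerivAt lam (lam' r) r)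
    (hlam'_cont : ContinuousOn lam' (Set.Ici 0))
    (hlam_nonneg : ∀ r ∈ Set.Ici (0 : ℝ), 0 ≤ lam r)
    (hchi_le : ∀ r ∈ Set.Ici (0 : ℝ), chi r ≤ 1)
    (hGB : ∀ R : ℝ, 0 < R →
      (2 / R) * ∫ r in (0 : ℝ)..R, (1 - r / R) * lam' r ≤
        (1 / R ^ 2) * (∫ r in (0 : ℝ)..R, lam r) +
          (2 / R) * ∫ r in (0 : ℝ)..R, (1 - r / R) * chi r) :
    ∀ R : ℝ, 0 < R → (∫ r in (0 : ℝ)..R, lam r) ≤ R ^ 2 + 2 * lam 0 * R := by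
  intro R hR
  have hsub : Set.uIcc (0:ℝ) R ⊆ Set.Ici 0 := by
    rw [Set.uIcc_of_le hR.le]; exact Set.Icc_subset_Ici_self
  have hlam'int : IntervalIntegrable lam' volume 0 R :=
    (hlam'_cont.mono hsub).intervalIntegrable
  have hlamcont : ContinuousOn lam (Set.uIcc (0:ℝ) R) :=
    fun x hx => (hlam_deriv x (hsub hx)).continuousAt.continuousWithinAt
  have hlamint : IntervalIntegrable lam volume 0 R := hlamcont.intervalIntegrable
  have hu : ∀ x ∈ Set.uIcc (0:ℝ) R, HasDerivAt (fun r => 1 - r/R) (-(1/R)) x := by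
    intro x _
    have := ((hasDerivAt_id x).div_const R).const_sub 1
    simpa using this
  have hv' : ∀ x ∈ Set.uIcc (0:ℝ) R, HasDerivAt lam (lam' x) x :=
    fun x hx => hlam_deriv x (hsub hx)
  have hparts : (∫ r in (0:ℝ)..R, (1 - r/R) * lam' r)
      = (1 - R/R) * lam R - (1 - 0/R) * lam 0
        - ∫ r in (0:ℝ)..R, (-(1/R)) * lam r :=
    intervalIntegral.integral_mul_deriv_eq_deriv_mul hu hv'
      intervalIntegrable_const hlam'int
  have hRR : R / R = 1 := div_self hR.ne'
  have hconstmul : (∫ r in (0:ℝ)..R, (-(1/R)) * lam r)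
      = (-(1/R)) * ∫ r in (0:ℝ)..R, lam r := intervalIntegral.integral_const_mul _ _
  have hparts' : (∫ r in (0:ℝ)..R, (1 - r/R) * lam' r)
      = -lam 0 + (1/R) * ∫ r in (0:ℝ)..R, lam r := by
    rw [hparts, hconstmul, hRR]
    ring_nf
  -- bound the chi term
  have hwcont : ContinuousOn (fun r : ℝ => 1 - r/R) (Set.uIcc (0:ℝ) R) :=
    (continuous_const.sub (continuous_id.div_const R)).continuousOn
  have hweight : (∫ r in (0:ℝ)..R, (1 - r/R)) = R / 2 := by
    have hint2 : IntervalIntegrable (fun r : ℝ => r / R) volume 0 R :=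
      Continuous.intervalIntegrable (by continuity) _ _
    have h1 := intervalIntegral.integral_sub
      (_root_.intervalIntegrable_const (c := (1:ℝ))) hint2
    rw [h1]
    simp [intervalIntegral.integral_div]
    field_simp
    ring
  have hchi_bound : (∫ r in (0:ℝ)..R, (1 - r/R) * chi r) ≤ R / 2 := by
    by_cases hint : IntervalIntegrable (fun r => (1 - r/R) * chi r) volume 0 R
    · have hmono : (∫ r in (0:ℝ)..R, (1 - r/R) * chi r)
          ≤ ∫ r in (0:ℝ)..R, (1 - r/R) := by
        apply intervalIntegral.integral_mono_on hR.le hint hwcont.intervalIntegrable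
        intro x hx
        have hx0 : (0:ℝ) ≤ x := hx.1
        have hxR : x ≤ R := hx.2
        have hw0 : 0 ≤ 1 - x/R := by
          have : x / R ≤ 1 := (div_le_one hR).mpr hxR
          linarith
        calc (1 - x/R) * chi x ≤ (1 - x/R) * 1 :=
              mul_le_mul_of_nonneg_left (hchi_le x hx0) hw0
          _ = 1 - x/R := mul_one _
      linarith [hweight ▸ hmono]
    · rw [intervalIntegral.integral_undef hint]
      positivity
  have key := hGB R hR
  rw [hparts'] at key
  set v := ∫ r in (0:ℝ)..R, lam r with hv
  have hchi2 : (2/R) * (∫ r in (0:ℝ)..R, (1 - r/R) * chi r) ≤ 1 := by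
    have h2R : 0 < 2 / R := by positivity
    calc (2/R) * (∫ r in (0:ℝ)..R, (1 - r/R) * chi r)
        ≤ (2/R) * (R/2) := by nlinarith
      _ = 1 := by field_simp
  have key2 : (2/R) * (-lam 0 + (1/R) * v) ≤ (1/R^2) * v + 1 := by linarith
  have hR2 : (0:ℝ) < R^2 := by positivity
  have expand : (2/R) * (-lam 0 + (1/R) * v) = (2*v - 2*lam 0 * R)/R^2 := by
    field_simp
    ring
  rw [expand, div_le_iff₀ hR2] at key2
  have hid : (1/R^2 * v + 1) * R^2 = v + R^2 := by field_simp
  linarith [hid ▸ key2]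
end

section
/- Let c > 0. Let λ : [0,∞) → (0,∞) and F : [0,∞) → ℝ be continuously differentiable, with F nondecreasing (so F'(r) ≥ 0). Assume: (i) ∫₀^r λ(t) dt ≤ c·r² for all r ≥ 1; and (ii) F(r) ≤ 2π − λ'(r) + (F'(r))^{1/2}·(λ(r))^{1/2} for all r ≥ 0. Then F(r) ≤ 2π + c for all r ≥ 0. -/
open Set MeasureTheory intervalIntegral

/-!
Suppose `F r > 2π + c` and put `g = F - 2π`, which stays positive beyond `r` since `F` is
nondecreasing. For a parameter `κ > 0`, the Gauss–Bonnet inequality and AM–GM give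
`(u + (λ + κ) / g)' ≤ λ / (4κ)`, so integrating from `r` to `R` and using the quadratic area
growth bounds `R - r - (λ(r) + κ) / g(r)` by `c R² / (4κ)`. The choice `κ = c R / 2` makes the
right-hand side `R / 2`, which leaves `R (g(r) - c) ≤ 2 (r g(r) + λ(r))` for every large `R`;
hence `g(r) ≤ c`.
-/

lemma comparison_deriv_le {κ g g' l l' : ℝ} (hκ : 0 < κ) (hg : 0 < g) (hl : 0 ≤ l)
    (hg' : 0 ≤ g') (hGB : g + l' ≤ √g' * √l) :
    1 + (l' * g - (l + κ) * g') / g ^ 2 ≤ l / (4 * κ) := by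
  have amgm : g * (√g' * √l) ≤ κ * g' + l * g ^ 2 / (4 * κ) := by
    rw [← sub_nonneg]
    have hsq : κ * g' + l * g ^ 2 / (4 * κ) - g * (√g' * √l)
        = (2 * κ * √g' - g * √l) ^ 2 / (4 * κ) := by
      field_simp
      linear_combination -(4 * κ ^ 2) * Real.sq_sqrt hg' - g ^ 2 * Real.sq_sqrt hl
    rw [hsq]
    positivity
  have : (l' * g - (l + κ) * g') / g ^ 2 ≤ l / (4 * κ) - 1 := by
    rw [div_le_iff₀ (by positivity)]
    linear_combination mul_le_mul_of_nonneg_left hGB hg.le + amgm + mul_nonneg hl hg'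
  linarith

lemma comparison_sub_le_integral {g g' l l' : ℝ → ℝ} {κ r R : ℝ} (hκ : 0 < κ) (hrR : r ≤ R)
    (hg : ∀ u ∈ Icc r R, 0 < g u) (hl : ∀ u ∈ Icc r R, 0 ≤ l u)
    (hg_deriv : ∀ u ∈ Icc r R, HasDerivAt g (g' u) u)
    (hl_deriv : ∀ u ∈ Icc r R, HasDerivAt l (l' u) u)
    (hg'_nonneg : ∀ u ∈ Icc r R, 0 ≤ g' u)
    (hGB : ∀ u ∈ Icc r R, g u + l' u ≤ √(g' u) * √(l u)) :
    R + (l R + κ) / g R - (r + (l r + κ) / g r) ≤ (∫ u in r..R, l u) / (4 * κ) := by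
  have hderiv : ∀ u ∈ Icc r R, HasDerivAt (fun u => u + (l u + κ) / g u)
      (1 + (l' u * g u - (l u + κ) * g' u) / g u ^ 2) u := fun u hu =>
    (hasDerivAt_id u).add (((hl_deriv u hu).add_const κ).div (hg_deriv u hu) (hg u hu).ne')
  have hl_cont : ContinuousOn l (Icc r R) := fun u hu =>
    (hl_deriv u hu).continuousAt.continuousWithinAt
  rw [← intervalIntegral.integral_div]
  refine sub_le_integral_of_hasDeriv_right_of_le hrR
    (fun u hu => (hderiv u hu).continuousAt.continuousWithinAt)
    (fun u hu => (hderiv u (Ioo_subset_Icc_self hu)).hasDerivWithinAt)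
    (hl_cont.div_const _).integrableOn_Icc (fun u hu => ?_)
  have hu := Ioo_subset_Icc_self hu
  exact comparison_deriv_le hκ (hg u hu) (hl u hu) (hg'_nonneg u hu) (hGB u hu)

lemma mul_sub_le_of_comparison {g g' l l' : ℝ → ℝ} {c r R : ℝ} (hc : 0 < c) (hR : 0 < R)
    (hrR : r ≤ R) (hg : ∀ u ∈ Icc r R, 0 < g u) (hl : ∀ u ∈ Icc r R, 0 ≤ l u)
    (hg_deriv : ∀ u ∈ Icc r R, HasDerivAt g (g' u) u)
    (hl_deriv : ∀ u ∈ Icc r R, HasDerivAt l (l' u) u)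
    (hg'_nonneg : ∀ u ∈ Icc r R, 0 ≤ g' u)
    (hGB : ∀ u ∈ Icc r R, g u + l' u ≤ √(g' u) * √(l u))
    (harea : ∫ u in r..R, l u ≤ c * R ^ 2) :
    R * (g r - c) ≤ 2 * (r * g r + l r) := by
  have hcomp := comparison_sub_le_integral (κ := c * R / 2) (by positivity) hrR hg hl hg_deriv
    hl_deriv hg'_nonneg hGB
  have hR_mem : R ∈ Icc r R := ⟨hrR, le_rfl⟩
  have hend : 0 ≤ (l R + c * R / 2) / g R :=
    div_nonneg (add_nonneg (hl R hR_mem) (by positivity)) (hg R hR_mem).le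
  have hhalf : (∫ u in r..R, l u) / (4 * (c * R / 2)) ≤ R / 2 := by
    rw [div_le_iff₀ (by positivity)]
    nlinarith
  have hstart : R / 2 - r ≤ (l r + c * R / 2) / g r := by linarith
  rw [le_div_iff₀ (hg r ⟨le_rfl, hrR⟩)] at hstart
  linarith

lemma integral_le_integral_zero_of_nonneg {l : ℝ → ℝ} {r R : ℝ} (hr : 0 ≤ r) (hrR : r ≤ R)
    (hl_nonneg : ∀ u ∈ Ici (0 : ℝ), 0 ≤ l u) (hl_cont : ContinuousOn l (Ici 0)) :
    ∫ u in r..R, l u ≤ ∫ u in (0 : ℝ)..R, l u := by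
  refine integral_mono_interval hr hrR le_rfl ?_ ?_
  · exact ae_restrict_of_forall_mem measurableSet_Ioc fun u hu => hl_nonneg u hu.1.le
  · refine (hl_cont.mono ?_).intervalIntegrable
    rw [uIcc_of_le (hr.trans hrR)]
    exact Icc_subset_Ici_self

lemma nonpos_of_forall_mul_le {a b R₀ : ℝ} (h : ∀ R ≥ R₀, R * a ≤ b) : a ≤ 0 := by
  by_contra! ha
  have := h (max R₀ (b / a + 1)) (le_max_left _ _)
  have : (b / a + 1) * a ≤ max R₀ (b / a + 1) * a := by gcongr; exact le_max_right _ _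
  rw [add_mul, div_mul_cancel₀ _ ha.ne'] at this
  linarith

theorem energy_bounded_general
    (c : ℝ) (hc : 0 < c) (lam F lam' F' : ℝ → ℝ)
    (hlam_pos : ∀ r ∈ Set.Ici (0 : ℝ), 0 < lam r)
    (hlam_deriv : ∀ r ∈ Set.Ici (0 : ℝ), HasDerivAt lam (lam' r) r)
    (hF_deriv : ∀ r ∈ Set.Ici (0 : ℝ), HasDerivAt F (F' r) r)
    (hF'_nonneg : ∀ r ∈ Set.Ici (0 : ℝ), 0 ≤ F' r)
    (harea : ∀ r : ℝ, 1 ≤ r → (∫ t in (0 : ℝ)..r, lam t) ≤ c * r ^ 2)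
    (hGB : ∀ r ∈ Set.Ici (0 : ℝ),
      F r ≤ 2 * Real.pi - lam' r + Real.sqrt (F' r) * Real.sqrt (lam r)) :
    ∀ r ∈ Set.Ici (0 : ℝ), F r ≤ 2 * Real.pi + c := by
  intro r hr
  by_contra! hA
  have hF_mono : MonotoneOn F (Ici 0) := monotoneOn_of_hasDerivWithinAt_nonneg (convex_Ici 0)
    (fun u hu => (hF_deriv u hu).continuousAt.continuousWithinAt)
    (fun u hu => (hF_deriv u (interior_subset hu)).hasDerivWithinAt)
    (fun u hu => hF'_nonneg u (interior_subset hu))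
  have hlam_cont : ContinuousOn lam (Ici 0) := fun u hu =>
    (hlam_deriv u hu).continuousAt.continuousWithinAt
  have hgrowth : ∀ R ≥ max 1 r,
      R * (F r - 2 * Real.pi - c) ≤ 2 * (r * (F r - 2 * Real.pi) + lam r) := by
    intro R hR
    have hrR : r ≤ R := le_of_max_le_right hR
    have hsub : Icc r R ⊆ Ici 0 := Icc_subset_Ici_iff hrR |>.2 hr
    have harea' : ∫ u in r..R, lam u ≤ c * R ^ 2 :=
      (integral_le_integral_zero_of_nonneg hr hrR (fun u hu => (hlam_pos u hu).le) hlam_cont).trans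
        (harea R (le_of_max_le_left hR))
    exact mul_sub_le_of_comparison (g := fun u => F u - 2 * Real.pi) hc
      (zero_lt_one.trans_le (le_of_max_le_left hR)) hrR
      (fun u hu => by linarith [hF_mono hr (hsub hu) hu.1])
      (fun u hu => (hlam_pos u (hsub hu)).le)
      (fun u hu => (hF_deriv u (hsub hu)).sub_const _)
      (fun u hu => hlam_deriv u (hsub hu)) (fun u hu => hF'_nonneg u (hsub hu))
      (fun u hu => by linarith [hGB u (hsub hu)]) harea'
  linarith [nonpos_of_forall_mul_le hgrowth]

/-- Cheng–Yau type boundedness: let `c > 0`, `λ : [0,∞) → (0,∞)` and `F : [0,∞) → ℝ`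
be `C¹` with `F' ≥ 0` (F nondecreasing).  If `∫₀^r λ ≤ c·r²` for all `r ≥ 1` and
`F(r) ≤ 2π − λ'(r) + √(F'(r))·√(λ(r))` for all `r ≥ 0`, then `F(r) ≤ 2π + c` for all
`r ≥ 0`. -/
theorem energy_bounded
    (c : ℝ) (hc : 0 < c) (lam F lam' F' : ℝ → ℝ)
    (hlam_pos : ∀ r ∈ Set.Ici (0 : ℝ), 0 < lam r)
    (hlam_deriv : ∀ r ∈ Set.Ici (0 : ℝ), HasDerivAt lam (lam' r) r)
    (hlam'_cont : ContinuousOn lam' (Set.Ici 0))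
    (hF_deriv : ∀ r ∈ Set.Ici (0 : ℝ), HasDerivAt F (F' r) r)
    (hF'_cont : ContinuousOn F' (Set.Ici 0))
    (hF'_nonneg : ∀ r ∈ Set.Ici (0 : ℝ), 0 ≤ F' r)
    (harea : ∀ r : ℝ, 1 ≤ r → (∫ t in (0 : ℝ)..r, lam t) ≤ c * r ^ 2)
    (hGB : ∀ r ∈ Set.Ici (0 : ℝ),
      F r ≤ 2 * Real.pi - lam' r + Real.sqrt (F' r) * Real.sqrt (lam r)) :
    ∀ r ∈ Set.Ici (0 : ℝ), F r ≤ 2 * Real.pi + c :=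
  energy_bounded_general c hc lam F lam' F' hlam_pos hlam_deriv hF_deriv hF'_nonneg harea hGB
end

section
/- Let c > 0. Let λ : [0,∞) → (0,∞) and F : [0,∞) → ℝ be continuously differentiable, with F nondecreasing and bounded above. Assume λ'(r) ≤ 2π + (F'(r))^{1/2}·(λ(r))^{1/2} for all r ≥ 0, and ∫₀^r λ(t) dt ≤ c·r² for all r ≥ 1. Then there is a constant C, depending only on c, λ(0), and sup F − F(0), such that λ(r) ≤ C·r for all r ≥ 1. -/
open Set MeasureTheory intervalIntegral

/-- Linear length growth: there is a constant `C` depending only on `c`, `λ(0)` and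
`sup F − F(0)` such that for any `C¹` functions `λ : [0,∞) → (0,∞)` and
`F : [0,∞) → ℝ` with `F` nondecreasing and bounded above by `M`, satisfying
`λ'(r) ≤ 2π + √(F'(r))·√(λ(r))` for all `r ≥ 0` and `∫₀^r λ ≤ c·r²` for all `r ≥ 1`,
one has `λ(r) ≤ C·r` for all `r ≥ 1`. -/
theorem length_growth_linear :
    ∃ C : ℝ → ℝ → ℝ → ℝ,
      ∀ (c : ℝ), 0 < c →
      ∀ (lam F lam' F' : ℝ → ℝ) (M : ℝ),
        (∀ r ∈ Set.Ici (0 : ℝ), 0 < lam r) →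
        (∀ r ∈ Set.Ici (0 : ℝ), HasDerivAt lam (lam' r) r) →
        ContinuousOn lam' (Set.Ici 0) →
        (∀ r ∈ Set.Ici (0 : ℝ), HasDerivAt F (F' r) r) →
        ContinuousOn F' (Set.Ici 0) →
        (∀ r ∈ Set.Ici (0 : ℝ), 0 ≤ F' r) →
        (∀ r ∈ Set.Ici (0 : ℝ), F r ≤ M) →
        (∀ r ∈ Set.Ici (0 : ℝ),
          lam' r ≤ 2 * Real.pi + Real.sqrt (F' r) * Real.sqrt (lam r)) →
        (∀ r : ℝ, 1 ≤ r → (∫ t in (0 : ℝ)..r, lam t) ≤ c * r ^ 2) →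
        ∀ r : ℝ, 1 ≤ r → lam r ≤ C c (lam 0) (M - F 0) * r := by
  refine ⟨fun c a b => a + 2 * Real.pi + (b + c) / 2, ?_⟩
  intro c hc lam F lam' F' M hlampos hdlam hcl hdF hcF hF'0 hFM hineq hint r hr
  have hr0 : (0:ℝ) ≤ r := le_trans zero_le_one hr
  have hrpos : (0:ℝ) < r := lt_of_lt_of_le zero_lt_one hr
  have hsub : Icc (0:ℝ) r ⊆ Ici 0 := fun x hx => hx.1
  have huIcc : uIcc (0:ℝ) r = Icc 0 r := uIcc_of_le hr0
  -- continuity on Icc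
  have hlamc : ContinuousOn lam (Icc 0 r) := fun x hx =>
    ((hdlam x (hsub hx)).continuousAt).continuousWithinAt
  have hFcIcc : ContinuousOn F' (Icc 0 r) := hcF.mono hsub
  have hlcIcc : ContinuousOn lam' (Icc 0 r) := hcl.mono hsub
  -- interval integrability
  have hInt_lam' : IntervalIntegrable lam' volume 0 r := by
    apply ContinuousOn.intervalIntegrable; rw [huIcc]; exact hlcIcc
  have hInt_F' : IntervalIntegrable F' volume 0 r := by
    apply ContinuousOn.intervalIntegrable; rw [huIcc]; exact hFcIcc
  have hInt_lam : IntervalIntegrable lam volume 0 r := by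
    apply ContinuousOn.intervalIntegrable; rw [huIcc]; exact hlamc
  -- FTC
  have hftc_lam : (∫ t in (0:ℝ)..r, lam' t) = lam r - lam 0 := by
    apply intervalIntegral.integral_eq_sub_of_hasDerivAt
    · intro x hx; rw [huIcc] at hx; exact hdlam x (hsub hx)
    · exact hInt_lam'
  have hftc_F : (∫ t in (0:ℝ)..r, F' t) = F r - F 0 := by
    apply intervalIntegral.integral_eq_sub_of_hasDerivAt
    · intro x hx; rw [huIcc] at hx; exact hdF x (hsub hx)
    · exact hInt_F'
  -- pointwise bound: lam' t ≤ 2π + (r * F' t + lam t / r)/2 on Icc 0 r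
  have hpt : ∀ t ∈ Icc (0:ℝ) r,
      lam' t ≤ 2 * Real.pi + (r * F' t + lam t / r) / 2 := by
    intro t ht
    have ht0 : t ∈ Ici (0:ℝ) := hsub ht
    have ha : (0:ℝ) ≤ F' t := hF'0 t ht0
    have hb : (0:ℝ) < lam t := hlampos t ht0
    have key : Real.sqrt (F' t) * Real.sqrt (lam t)
        ≤ (r * F' t + lam t / r) / 2 := by
      have hx : (0:ℝ) ≤ r * F' t := mul_nonneg hr0 ha
      have hy : (0:ℝ) ≤ lam t / r := le_of_lt (div_pos hb hrpos)
      have heq : Real.sqrt (F' t) * Real.sqrt (lam t)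
          = Real.sqrt (r * F' t) * Real.sqrt (lam t / r) := by
        rw [← Real.sqrt_mul ha, ← Real.sqrt_mul hx]
        congr 1
        field_simp
      rw [heq]
      nlinarith [sq_nonneg (Real.sqrt (r * F' t) - Real.sqrt (lam t / r)),
        Real.sq_sqrt hx, Real.sq_sqrt hy,
        Real.sqrt_nonneg (r * F' t), Real.sqrt_nonneg (lam t / r)]
    linarith [hineq t ht0, key]
  -- integrability of the majorant
  have hgc : ContinuousOn (fun t => 2 * Real.pi + (r * F' t + lam t / r) / 2)
      (Icc 0 r) := by
    apply ContinuousOn.add continuousOn_const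
    apply ContinuousOn.div_const
    exact ((continuousOn_const.mul hFcIcc).add (hlamc.div_const r))
  have hInt_g : IntervalIntegrable
      (fun t => 2 * Real.pi + (r * F' t + lam t / r) / 2) volume 0 r := by
    apply ContinuousOn.intervalIntegrable; rw [huIcc]; exact hgc
  -- integrate the pointwise bound
  have hmono : (∫ t in (0:ℝ)..r, lam' t)
      ≤ ∫ t in (0:ℝ)..r, (2 * Real.pi + (r * F' t + lam t / r) / 2) := by
    apply intervalIntegral.integral_mono_on hr0 hInt_lam' hInt_g hpt
  -- compute the integral of the majorant
  have hInt_rF : IntervalIntegrable (fun t => r * F' t) volume 0 r :=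
    hInt_F'.const_mul r
  have hInt_ld : IntervalIntegrable (fun t => lam t / r) volume 0 r :=
    hInt_lam.div_const r
  have hcalc : (∫ t in (0:ℝ)..r, (2 * Real.pi + (r * F' t + lam t / r) / 2))
      = 2 * Real.pi * r + (r * (F r - F 0) + (∫ t in (0:ℝ)..r, lam t) / r) / 2 := by
    rw [intervalIntegral.integral_add intervalIntegrable_const
      ((hInt_rF.add hInt_ld).div_const 2)]
    rw [intervalIntegral.integral_const]
    rw [intervalIntegral.integral_div]
    rw [intervalIntegral.integral_add hInt_rF hInt_ld]
    rw [intervalIntegral.integral_const_mul, intervalIntegral.integral_div]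
    rw [hftc_F]
    simp [smul_eq_mul]
    ring
  -- assemble
  have h1 : lam r ≤ lam 0 + 2 * Real.pi * r
      + (r * (F r - F 0) + (∫ t in (0:ℝ)..r, lam t) / r) / 2 := by
    have := hmono
    rw [hftc_lam, hcalc] at this
    linarith
  have h2 : r * (F r - F 0) ≤ r * (M - F 0) := by
    have := hFM r (le_of_lt hrpos)
    nlinarith
  have h3 : (∫ t in (0:ℝ)..r, lam t) / r ≤ c * r := by
    rw [div_le_iff₀ hrpos]
    calc (∫ t in (0:ℝ)..r, lam t) ≤ c * r ^ 2 := hint r hr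
      _ = c * r * r := by ring
  have h4 : lam 0 ≤ lam 0 * r := by
    have h0 : 0 < lam 0 := hlampos 0 Set.self_mem_Ici
    nlinarith
  nlinarith [Real.pi_pos]
end

section
/- Let B = B(0,1) be the open unit ball in Euclidean ℝ³. Let u : B → ℝ be C² and square-integrable on B, and let f : B → ℝ be continuous with Δu = −f on B and f ≥ 0 on B. Then for every r ∈ (0,1) there is a constant c = c(r), independent of u and f, such that ∫_{B(0,r)} f ≤ c·(∫_B u²)^{1/2}. -/
open MeasureTheory Metric

/-- The Euclidean Laplacian of `u : ℝ³ → ℝ`, as the sum of the pure second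
partial derivatives in the coordinate directions. -/
noncomputable def lap (u : EuclideanSpace ℝ (Fin 3) → ℝ)
    (x : EuclideanSpace ℝ (Fin 3)) : ℝ :=
  ∑ i : Fin 3,
    fderiv ℝ (fun y => fderiv ℝ u y (EuclideanSpace.single i (1 : ℝ))) x
      (EuclideanSpace.single i (1 : ℝ))

/-
Pair the equation with a bump function `η` that is `1` on `B(0,r)` and supported in `B(0,1)`.
Since `f ≥ 0`, `∫_{B(0,r)} f ≤ ∫ η f = -∫ η Δu`, and integrating by parts twice in each coordinate
direction moves the Laplacian onto `η`: `-∫ η Δu = -∫_B (Δη) u ≤ ‖Δη‖_∞ |B|^{1/2} ‖u‖_{L²(B)}` by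
Cauchy–Schwarz. The constant depends on `η` alone, hence on `r` alone, and no boundary behaviour
of `u` enters because `η` vanishes near the sphere.
-/

section Integrability

variable {X : Type*} [TopologicalSpace X] [MeasurableSpace X] [OpensMeasurableSpace X]
  {μ : Measure X} [IsFiniteMeasureOnCompacts μ] {s : Set X} {φ g : X → ℝ}

theorem integrable_mul_of_tsupport_subset (hφ : Continuous φ) (hφc : HasCompactSupport φ)
    (hs : IsOpen s) (hφs : tsupport φ ⊆ s) (hg : ContinuousOn g s) :
    Integrable (fun x => φ x * g x) μ :=
  ((hφ.continuousOn.mul hg).continuous_of_tsupport_subset hs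
      ((tsupport_mul_subset_left).trans hφs)).integrable_of_hasCompactSupport hφc.mul_right

end Integrability

section IntegrationByParts

variable {E : Type*} [NormedAddCommGroup E] [NormedSpace ℝ E] {s : Set E} {φ g : E → ℝ}

theorem ContDiff.fderiv_apply_right {n m : WithTop ℕ∞} (hφ : ContDiff ℝ n φ) (hmn : m + 1 ≤ n)
    (v : E) : ContDiff ℝ m fun x => fderiv ℝ φ x v :=
  (hφ.fderiv_right hmn).clm_apply contDiff_const

theorem ContDiffOn.fderiv_apply_of_isOpen {n m : WithTop ℕ∞} (hg : ContDiffOn ℝ n g s)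
    (hs : IsOpen s) (hmn : m + 1 ≤ n) (v : E) : ContDiffOn ℝ m (fun x => fderiv ℝ g x v) s :=
  (hg.fderiv_of_isOpen hs hmn).clm_apply contDiffOn_const

theorem ContDiff.continuous_fderiv_fderiv_apply (hφ : ContDiff ℝ 2 φ) (v w : E) :
    Continuous fun x => fderiv ℝ (fun y => fderiv ℝ φ y v) x w :=
  ((hφ.fderiv_apply_right (m := 1) one_add_one_eq_two.le v).fderiv_apply_right
    (zero_add 1).le w).continuous

theorem ContDiffOn.continuousOn_fderiv_fderiv_apply (hg : ContDiffOn ℝ 2 g s) (hs : IsOpen s)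
    (v w : E) : ContinuousOn (fun x => fderiv ℝ (fun y => fderiv ℝ g y v) x w) s :=
  ((hg.fderiv_apply_of_isOpen hs (m := 1) one_add_one_eq_two.le v).fderiv_apply_of_isOpen hs
    (zero_add 1).le w).continuousOn

variable [FiniteDimensional ℝ E] [MeasurableSpace E] [BorelSpace E] {μ : Measure E}
  [μ.IsAddHaarMeasure]

/-- Integration by parts only asks each factor to be differentiable on the support of the other,
which is why `g` need only be `C¹` near `tsupport φ`. -/
theorem integral_mul_fderiv_eq_neg_fderiv_mul_of_tsupport_subset (v : E)
    (hφ : ContDiff ℝ 1 φ) (hφc : HasCompactSupport φ) (hs : IsOpen s) (hφs : tsupport φ ⊆ s)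
    (hg : ContDiffOn ℝ 1 g s) :
    ∫ x, φ x * fderiv ℝ g x v ∂μ = -∫ x, fderiv ℝ φ x v * g x ∂μ :=
  integral_mul_fderiv_eq_neg_fderiv_mul_of_integrable
    (integrable_mul_of_tsupport_subset (hφ.fderiv_apply_right (m := 0) (zero_add 1).le v).continuous
      (hφc.fderiv_apply ℝ v) hs ((tsupport_fderiv_apply_subset ℝ v).trans hφs) hg.continuousOn)
    (integrable_mul_of_tsupport_subset hφ.continuous hφc hs hφs
      (hg.fderiv_apply_of_isOpen hs (m := 0) (zero_add 1).le v).continuousOn)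
    (integrable_mul_of_tsupport_subset hφ.continuous hφc hs hφs hg.continuousOn)
    (fun x _ => hφ.differentiable one_ne_zero x)
    (fun _ hx => (hg.differentiableOn one_ne_zero).differentiableAt (hs.mem_nhds (hφs hx)))

theorem integral_mul_fderiv_fderiv_eq_fderiv_fderiv_mul (v : E)
    (hφ : ContDiff ℝ 2 φ) (hφc : HasCompactSupport φ) (hs : IsOpen s) (hφs : tsupport φ ⊆ s)
    (hg : ContDiffOn ℝ 2 g s) :
    ∫ x, φ x * fderiv ℝ (fun y => fderiv ℝ g y v) x v ∂μ =
      ∫ x, fderiv ℝ (fun y => fderiv ℝ φ y v) x v * g x ∂μ := by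
  have h₁ := integral_mul_fderiv_eq_neg_fderiv_mul_of_tsupport_subset (μ := μ) v
    (hφ.of_le one_le_two) hφc hs hφs (hg.fderiv_apply_of_isOpen hs one_add_one_eq_two.le v)
  have h₂ := integral_mul_fderiv_eq_neg_fderiv_mul_of_tsupport_subset (μ := μ) v
    (hφ.fderiv_apply_right one_add_one_eq_two.le v) (hφc.fderiv_apply ℝ v) hs
    ((tsupport_fderiv_apply_subset ℝ v).trans hφs) (hg.of_le one_le_two)
  beta_reduce at h₂
  rw [h₁, h₂, neg_neg]

end IntegrationByParts

section CauchySchwarz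

variable {α : Type*} [MeasurableSpace α] {ν : Measure α} [IsFiniteMeasure ν] {u : α → ℝ}

theorem integral_abs_le_sqrt_measureReal_univ_mul_sqrt_integral_sq (hu : MemLp u 2 ν) :
    ∫ x, |u x| ∂ν ≤ √(ν.real Set.univ) * √(∫ x, u x ^ 2 ∂ν) := by
  have hpq : Real.HolderConjugate 2 2 := Real.holderConjugate_iff.mpr ⟨one_lt_two, by norm_num⟩
  have h := integral_mul_le_Lp_mul_Lq_of_nonneg hpq
    (Filter.Eventually.of_forall fun _ => zero_le_one)
    (Filter.Eventually.of_forall fun x => abs_nonneg (u x))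
    (memLp_const (1 : ℝ)) (by rw [ENNReal.ofReal_ofNat]; exact hu.abs)
  simpa only [one_mul, Real.one_rpow, integral_const, smul_eq_mul, mul_one, Real.rpow_two, sq_abs,
    one_pow, ← Real.sqrt_eq_rpow] using h

theorem abs_integral_mul_le_of_abs_le {g : α → ℝ} {M : ℝ} (hM : 0 ≤ M)
    (hg : ∀ᵐ x ∂ν, |g x| ≤ M) (hu : MemLp u 2 ν) :
    |∫ x, g x * u x ∂ν| ≤ M * √(ν.real Set.univ) * √(∫ x, u x ^ 2 ∂ν) := by
  calc |∫ x, g x * u x ∂ν| ≤ ∫ x, M * |u x| ∂ν :=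
        norm_integral_le_of_norm_le ((hu.integrable one_le_two).abs.const_mul M) <| by
          filter_upwards [hg] with x hx
          rw [Real.norm_eq_abs, abs_mul]
          exact mul_le_mul_of_nonneg_right hx (abs_nonneg _)
    _ = M * ∫ x, |u x| ∂ν := integral_const_mul M _
    _ ≤ M * √(ν.real Set.univ) * √(∫ x, u x ^ 2 ∂ν) := by
        rw [mul_assoc]
        exact mul_le_mul_of_nonneg_left
          (integral_abs_le_sqrt_measureReal_univ_mul_sqrt_integral_sq hu) hM

end CauchySchwarz

section Laplacian

local notation "ℝ³" => EuclideanSpace ℝ (Fin 3)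

variable {s : Set ℝ³} {φ g : ℝ³ → ℝ}

theorem lap_eq_zero_of_notMem_tsupport {x : ℝ³} (hx : x ∉ tsupport φ) : lap φ x = 0 :=
  Finset.sum_eq_zero fun i _ => by
    rw [fderiv_of_notMem_tsupport ℝ fun h => hx (tsupport_fderiv_apply_subset ℝ _ h)]
    rfl

theorem HasCompactSupport.lap (hφ : HasCompactSupport φ) : HasCompactSupport (lap φ) :=
  hφ.mono' fun _ hx => by_contra fun h => hx (lap_eq_zero_of_notMem_tsupport h)

theorem ContDiff.continuous_lap (hφ : ContDiff ℝ 2 φ) : Continuous (lap φ) :=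
  continuous_finsetSum _ fun _ _ => hφ.continuous_fderiv_fderiv_apply _ _

theorem integral_mul_lap_eq_integral_lap_mul (hφ : ContDiff ℝ 2 φ) (hφc : HasCompactSupport φ)
    (hs : IsOpen s) (hφs : tsupport φ ⊆ s) (hg : ContDiffOn ℝ 2 g s) :
    ∫ x, φ x * lap g x = ∫ x, lap φ x * g x := by
  simp only [lap, Finset.mul_sum, Finset.sum_mul]
  rw [integral_finsetSum _ fun i _ => ?_, integral_finsetSum _ fun i _ => ?_]
  · exact Finset.sum_congr rfl fun i _ =>
      integral_mul_fderiv_fderiv_eq_fderiv_fderiv_mul _ hφ hφc hs hφs hg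
  · exact integrable_mul_of_tsupport_subset (hφ.continuous_fderiv_fderiv_apply _ _)
      ((hφc.fderiv_apply ℝ _).fderiv_apply ℝ _) hs
      ((tsupport_fderiv_apply_subset ℝ _).trans ((tsupport_fderiv_apply_subset ℝ _).trans hφs))
      hg.continuousOn
  · exact integrable_mul_of_tsupport_subset hφ.continuous hφc hs hφs
      (hg.continuousOn_fderiv_fderiv_apply hs _ _)

theorem integral_mul_le_of_lap_eq_neg {u f : ℝ³ → ℝ} {M : ℝ} (hs : IsOpen s) (hs_fin : volume s ≠ ⊤)
    (hφ : ContDiff ℝ 2 φ) (hφc : HasCompactSupport φ) (hφs : tsupport φ ⊆ s)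
    (hM : ∀ x, |lap φ x| ≤ M) (hu : ContDiffOn ℝ 2 u s)
    (hu_sq : IntegrableOn (fun x => u x ^ 2) s volume) (hlap : ∀ x ∈ s, lap u x = -f x) :
    ∫ x, φ x * f x ≤ M * √(volume.real s) * √(∫ x in s, u x ^ 2) := by
  have : IsFiniteMeasure (volume.restrict s) := isFiniteMeasure_restrict.mpr hs_fin
  have hu_memLp : MemLp u 2 (volume.restrict s) :=
    (memLp_two_iff_integrable_sq (hu.continuousOn.aestronglyMeasurable hs.measurableSet)).2 hu_sq
  have hφf_eq : ∀ x, φ x * f x = -(φ x * lap u x) := fun x => by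
    by_cases hx : x ∈ s
    · rw [hlap x hx, mul_neg, neg_neg]
    · simp [image_eq_zero_of_notMem_tsupport fun h => hx (hφs h)]
  calc ∫ x, φ x * f x = -∫ x, φ x * lap u x := by simp only [hφf_eq, integral_neg]
    _ = -∫ x in s, lap φ x * u x := by
        rw [integral_mul_lap_eq_integral_lap_mul hφ hφc hs hφs hu,
          setIntegral_eq_integral_of_forall_compl_eq_zero fun x hx => by
            rw [lap_eq_zero_of_notMem_tsupport fun h => hx (hφs h), zero_mul]]
    _ ≤ |∫ x in s, lap φ x * u x| := neg_le_abs _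
    _ ≤ M * √(volume.real s) * √(∫ x in s, u x ^ 2) := by
        simpa only [measureReal_restrict_apply_univ] using
          abs_integral_mul_le_of_abs_le ((abs_nonneg _).trans (hM 0))
            (Filter.Eventually.of_forall hM) hu_memLp

end Laplacian

/-- L¹ control of a nonnegative right-hand side: if `u` is `C²` and square-integrable
on the unit ball `B ⊂ ℝ³`, `f` is continuous with `Δu = −f` and `f ≥ 0` on `B`, then
for every `r ∈ (0,1)` there is `c = c(r)`, independent of `u` and `f`, with
`∫_{B(0,r)} f ≤ c·(∫_B u²)^{1/2}`. -/
theorem laplacian_L1_bound_by_L2_potential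
    (r : ℝ) (hr : r ∈ Set.Ioo (0 : ℝ) 1) :
    ∃ c : ℝ, ∀ u f : EuclideanSpace ℝ (Fin 3) → ℝ,
      ContDiffOn ℝ 2 u (ball 0 1) →
      IntegrableOn (fun x => (u x) ^ 2) (ball 0 1) volume →
      ContinuousOn f (ball 0 1) →
      (∀ x ∈ ball (0 : EuclideanSpace ℝ (Fin 3)) 1, lap u x = - f x) →
      (∀ x ∈ ball (0 : EuclideanSpace ℝ (Fin 3)) 1, 0 ≤ f x) →
      (∫ x in ball (0 : EuclideanSpace ℝ (Fin 3)) r, f x) ≤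
        c * Real.sqrt (∫ x in ball (0 : EuclideanSpace ℝ (Fin 3)) 1, (u x) ^ 2) := by
  obtain ⟨hr₀, hr₁⟩ := hr
  let η : ContDiffBump (0 : EuclideanSpace ℝ (Fin 3)) := ⟨r, (1 + r) / 2, hr₀, by linarith⟩
  have hη_ball : tsupport η ⊆ ball 0 1 := by
    rw [η.tsupport_eq]
    exact closedBall_subset_ball (by change (1 + r) / 2 < 1; linarith)
  obtain ⟨M, hM⟩ := η.hasCompactSupport.lap.exists_bound_of_continuous η.contDiff.continuous_lap
  refine ⟨M * √(volume.real (ball (0 : EuclideanSpace ℝ (Fin 3)) 1)),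
    fun u f hu hu_sq hf hlap hf₀ => ?_⟩
  have hηf_nonneg : ∀ x, 0 ≤ η x * f x := fun x => by
    by_cases hx : x ∈ ball 0 1
    · exact mul_nonneg η.nonneg (hf₀ x hx)
    · simp [image_eq_zero_of_notMem_tsupport fun h => hx (hη_ball h)]
  calc ∫ x in ball 0 r, f x = ∫ x in ball 0 r, η x * f x :=
        setIntegral_congr_fun measurableSet_ball fun x hx => by
          rw [η.one_of_mem_closedBall (ball_subset_closedBall hx), one_mul]
    _ ≤ ∫ x, η x * f x :=
        setIntegral_le_integral
          (integrable_mul_of_tsupport_subset η.continuous η.hasCompactSupport isOpen_ball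
            hη_ball hf)
          (Filter.Eventually.of_forall hηf_nonneg)
    _ ≤ _ :=
        integral_mul_le_of_lap_eq_neg isOpen_ball measure_ball_lt_top.ne η.contDiff
          η.hasCompactSupport hη_ball (fun x => (Real.norm_eq_abs _).symm.trans_le (hM x)) hu hu_sq
          hlap
end

section
/- Fix α ∈ ℝ and a > 1, and define τ_a : (1,∞) → ℝ by τ_a(r) = (α/8)·(1 − 1/r)^{1/2}·( ∫_a^r s⁻⁵·(1 − 1/s)^{−3/2} ds − 2·a^{−5/2}·(a − 1)^{−1/2} ). Then τ_a is differentiable on (1,∞) and satisfies, for every r ∈ (1,∞), the linear ODE (2/r)·(1 − 1/r)·τ_a'(r) − τ_a(r)/r³ = α/(4·r⁶). -/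
open MeasureTheory intervalIntegral

/-!
Write `L(r) = √(1 - 1/r)`. Since `L' = 1 / (2 L r²)` and `L² = 1 - 1/r`, `L` solves the homogeneous
equation `(2/r)(1 - 1/r) L' = L / r³`. Hence for `τ = (α/8) L (F - K)` with `F' = f` the homogeneous
part cancels (variation of constants) and what remains is `(α/8)(2/r) L³ f`, which equals
`α / (4 r⁶)` because the weight `(1 - 1/s)^{-3/2}` in the integrand `f` is exactly `L⁻³`.
-/

open Set

theorem hasDerivAt_integral_right_of_continuousOn {E : Type*} [NormedAddCommGroup E]
    [NormedSpace ℝ E] [CompleteSpace E] {f : ℝ → E} {U : Set ℝ} {a r : ℝ}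
    (hU : IsOpen U) (hf : ContinuousOn f U) (hsub : uIcc a r ⊆ U) :
    HasDerivAt (fun x => ∫ s in a..x, f s) (f r) r :=
  have hr : r ∈ U := hsub right_mem_uIcc
  integral_hasDerivAt_right (hf.mono hsub).intervalIntegrable
    (hf.stronglyMeasurableAtFilter hU r hr) (hf.continuousAt (hU.mem_nhds hr))

namespace Schwarzschild

variable {r : ℝ}

/-- The lapse `√(1 - 2m/r)` of the Schwarzschild metric of mass `m = 1/2`. -/
noncomputable def lapse (r : ℝ) : ℝ := √(1 - 1 / r)

noncomputable def integrand (s : ℝ) : ℝ := (s ^ 5)⁻¹ * (1 - 1 / s) ^ (-(3 : ℝ) / 2)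

lemma one_sub_one_div_pos (hr : 1 < r) : 0 < 1 - 1 / r := by
  have : 1 / r < 1 := (div_lt_one (by linarith)).2 hr
  linarith

lemma lapse_pos (hr : 1 < r) : 0 < lapse r :=
  Real.sqrt_pos.2 (one_sub_one_div_pos hr)

lemma lapse_sq (hr : 1 < r) : lapse r ^ 2 = 1 - 1 / r :=
  Real.sq_sqrt (one_sub_one_div_pos hr).le

lemma hasDerivAt_lapse (hr : 1 < r) : HasDerivAt lapse (1 / (2 * lapse r * r ^ 2)) r := by
  have hinner : HasDerivAt (fun x : ℝ => 1 - 1 / x) ((r ^ 2)⁻¹) r := by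
    simpa using (hasDerivAt_inv (by positivity : r ≠ 0)).const_sub 1
  exact ((Real.hasDerivAt_sqrt (one_sub_one_div_pos hr).ne').comp r hinner).congr_deriv
    (by rw [lapse]; field_simp)

lemma lapse_solves_homogeneous (hr : 1 < r) :
    2 / r * (1 - 1 / r) * (1 / (2 * lapse r * r ^ 2)) = lapse r / r ^ 3 := by
  have := lapse_pos hr
  rw [← lapse_sq hr]
  field_simp

lemma continuousOn_integrand : ContinuousOn integrand (Ioi 1) := by
  intro x (hx : 1 < x)
  have hx0 : x ≠ 0 := by positivity
  apply ContinuousAt.continuousWithinAt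
  unfold integrand
  exact ((continuousAt_id.pow 5).inv₀ (pow_ne_zero 5 hx0)).mul
    ((continuousAt_const.sub (continuousAt_const.div continuousAt_id hx0)).rpow_const
      (Or.inl (one_sub_one_div_pos hx).ne'))

lemma lapse_pow_three_mul_integrand (hr : 1 < r) : lapse r ^ 3 * integrand r = (r ^ 5)⁻¹ := by
  have hpos := one_sub_one_div_pos hr
  rw [lapse, integrand, Real.sqrt_eq_rpow, ← Real.rpow_natCast, ← Real.rpow_mul hpos.le,
    mul_left_comm, ← Real.rpow_add hpos]
  norm_num

end Schwarzschild

open Schwarzschild in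
/-- The Schwarzschild potential `τ_a` (mass `m = 1/2`): for `a > 1`, the function
`τ_a(r) = (α/8)·(1 − 1/r)^{1/2}·(∫_a^r s⁻⁵·(1 − 1/s)^{−3/2} ds − 2·a^{−5/2}·(a − 1)^{−1/2})`
is differentiable on `(1,∞)` and satisfies the linear ODE
`(2/r)·(1 − 1/r)·τ_a'(r) − τ_a(r)/r³ = α/(4·r⁶)` there. -/
theorem schwarzschild_potential_ode
    (α a : ℝ) (ha : 1 < a) (tau : ℝ → ℝ)
    (htau : ∀ r : ℝ, 1 < r → tau r =
      (α / 8) * Real.sqrt (1 - 1 / r) *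
        ((∫ s in a..r, (s ^ 5)⁻¹ * (1 - 1 / s) ^ (-(3 : ℝ) / 2)) -
          2 * a ^ (-(5 : ℝ) / 2) * (a - 1) ^ (-(1 : ℝ) / 2))) :
    ∃ tau' : ℝ → ℝ,
      (∀ r : ℝ, 1 < r → HasDerivAt tau (tau' r) r) ∧
      (∀ r : ℝ, 1 < r →
        (2 / r) * (1 - 1 / r) * tau' r - tau r / r ^ 3 = α / (4 * r ^ 6)) := by
  set K := 2 * a ^ (-(5 : ℝ) / 2) * (a - 1) ^ (-(1 : ℝ) / 2)
  set F : ℝ → ℝ := fun r => ∫ s in a..r, integrand s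
  have htau_eq : ∀ r, 1 < r → tau r = α / 8 * (lapse r * (F r - K)) := fun r hr => by
    rw [htau r hr]; simp only [F, lapse, integrand]; ring
  refine ⟨fun r => α / 8 * (1 / (2 * lapse r * r ^ 2) * (F r - K) + lapse r * integrand r),
    fun r hr => ?_, fun r hr => ?_⟩
  · have hF : HasDerivAt F (integrand r) r :=
      hasDerivAt_integral_right_of_continuousOn isOpen_Ioi continuousOn_integrand
        fun x hx => lt_of_lt_of_le (lt_min ha hr) hx.1
    refine (((hasDerivAt_lapse hr).mul (hF.sub_const K)).const_mul (α / 8)).congr_of_eventuallyEq ?_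
    filter_upwards [Ioi_mem_nhds hr] with x hx using htau_eq x hx
  · rw [htau_eq r hr]
    linear_combination (α / 8 * (F r - K)) * lapse_solves_homogeneous hr
      - (α / 4 / r * lapse r * integrand r) * lapse_sq hr
      + (α / 4 / r) * lapse_pow_three_mul_integrand hr
end

section
/- Fix α ∈ ℝ and for a > 1 let τ_a : (1,∞) → ℝ be τ_a(r) = (α/8)·(1 − 1/r)^{1/2}·( ∫_a^r s⁻⁵·(1 − 1/s)^{−3/2} ds − 2·a^{−5/2}·(a − 1)^{−1/2} ). Then for every r > 1 the limit τ(r) = lim_{a→1⁺} τ_a(r) exists, and it is given explicitly by τ(r) = −(α/4)·(1 + 3t² − t⁴ + (1/5)t⁶) where t = (1 − 1/r)^{1/2}. -/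
/-!
Write `t = (1 - 1/s)^{1/2}` (the Schwarzschild lapse for `m = 1/2`), so that `s⁻¹ = 1 - t²`.
The integrand becomes `2 (1 - t²)³ t⁻² dt`, with primitive `G t = -2/t - 6t + 2t³ - (2/5)t⁵`,
and the boundary term `2 a^{-5/2} (a - 1)^{-1/2}` becomes `2 (1 - u²)³ / u` with `u` the lapse
at `a`. Both have singular part `2/u`, so `G u + 2 (1 - u²)³ / u` is a polynomial in `u`
vanishing at `0`; as `u → 0` when `a → 1⁺`, the renormalised integral tends to `G t`, and
`(α/8) t G t` is the stated closed form.
-/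

open MeasureTheory intervalIntegral Filter Real Topology

noncomputable def lapse (s : ℝ) : ℝ := √(1 - 1 / s)

noncomputable def lapsePrimitive (t : ℝ) : ℝ := -2 / t - 6 * t + 2 * t ^ 3 - 2 / 5 * t ^ 5

lemma hasDerivAt_lapsePrimitive {t : ℝ} (ht : t ≠ 0) :
    HasDerivAt lapsePrimitive (2 * (1 - t ^ 2) ^ 3 / t ^ 2) t := by
  have h := ((((hasDerivAt_inv ht).const_mul (-2)).sub ((hasDerivAt_id t).const_mul 6)).add
    ((hasDerivAt_pow 3 t).const_mul 2)).sub ((hasDerivAt_pow 5 t).const_mul (2 / 5))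
  refine (h.congr_deriv ?_).congr_of_eventuallyEq (Eventually.of_forall fun u => ?_)
  · field_simp
    ring
  · simp [lapsePrimitive, div_eq_mul_inv]

lemma lapsePrimitive_add_boundary {t : ℝ} (ht : t ≠ 0) :
    lapsePrimitive t + 2 * (1 - t ^ 2) ^ 3 / t = -12 * t + 8 * t ^ 3 - 12 / 5 * t ^ 5 := by
  rw [lapsePrimitive]
  field_simp
  ring

section lapse

variable {s : ℝ}

lemma one_sub_one_div_pos (hs : 1 < s) : 0 < 1 - 1 / s :=
  sub_pos.2 ((div_lt_one (by linarith)).2 hs)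

lemma lapse_pos (hs : 1 < s) : 0 < lapse s :=
  sqrt_pos.2 (one_sub_one_div_pos hs)

lemma lapse_sq (hs : 1 ≤ s) : lapse s ^ 2 = 1 - 1 / s :=
  sq_sqrt (sub_nonneg.2 ((div_le_one (by linarith)).2 hs))

lemma tendsto_lapse_one : Tendsto lapse (𝓝 1) (𝓝 0) := by
  have : ContinuousAt lapse 1 :=
    (continuousAt_const.sub (continuousAt_const.div continuousAt_id one_ne_zero)).sqrt
  simpa [lapse] using this.tendsto

lemma hasDerivAt_lapse (hs : 1 < s) :
    HasDerivAt lapse ((1 - lapse s ^ 2) ^ 2 / (2 * lapse s)) s := by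
  have hs0 : s ≠ 0 := (zero_lt_one.trans hs).ne'
  have hinv : HasDerivAt (fun u : ℝ => 1 - 1 / u) (1 / s ^ 2) s := by
    simpa [one_div] using (hasDerivAt_inv hs0).const_sub 1
  refine (hinv.sqrt (one_sub_one_div_pos hs).ne').congr_deriv ?_
  rw [lapse_sq hs.le, lapse]
  field_simp
  ring

lemma integrand_eq_lapse (hs : 1 < s) :
    (s ^ 5)⁻¹ * (1 - 1 / s) ^ (-(3 : ℝ) / 2) = (1 - lapse s ^ 2) ^ 5 / lapse s ^ 3 := by
  rw [rpow_div_two_eq_sqrt _ (one_sub_one_div_pos hs).le, rpow_neg (sqrt_nonneg _),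
    lapse_sq hs.le]
  unfold lapse
  norm_cast
  field_simp
  ring

lemma boundary_eq_lapse (hs : 1 < s) :
    2 * s ^ (-(5 : ℝ) / 2) * (s - 1) ^ (-(1 : ℝ) / 2) =
      2 * (1 - lapse s ^ 2) ^ 3 / lapse s := by
  have hs0 : 0 < s := zero_lt_one.trans hs
  have hsqrt : √(s - 1) = √s * lapse s := by
    rw [lapse, ← sqrt_mul hs0.le]
    congr 1
    field_simp
  have hu := lapse_pos hs
  rw [rpow_div_two_eq_sqrt _ hs0.le, rpow_div_two_eq_sqrt _ (by linarith), hsqrt,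
    rpow_neg (sqrt_nonneg _), rpow_neg (mul_pos (sqrt_pos.2 hs0) hu).le, lapse_sq hs.le]
  norm_cast
  field_simp
  rw [show √s ^ 6 = (√s ^ 2) ^ 3 by ring, sq_sqrt hs0.le]
  ring

lemma continuousAt_integrand (hs : 1 < s) :
    ContinuousAt (fun s : ℝ => (s ^ 5)⁻¹ * (1 - 1 / s) ^ (-(3 : ℝ) / 2)) s := by
  have hs0 : s ≠ 0 := (zero_lt_one.trans hs).ne'
  exact ((continuousAt_id.pow 5).inv₀ (pow_ne_zero 5 hs0)).mul
    ((continuousAt_const.sub (continuousAt_const.div continuousAt_id hs0)).rpow_const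
      (Or.inl (one_sub_one_div_pos hs).ne'))

lemma hasDerivAt_lapsePrimitive_comp_lapse (hs : 1 < s) :
    HasDerivAt (fun s => lapsePrimitive (lapse s))
      ((s ^ 5)⁻¹ * (1 - 1 / s) ^ (-(3 : ℝ) / 2)) s := by
  have hu := lapse_pos hs
  refine ((hasDerivAt_lapsePrimitive hu.ne').comp s (hasDerivAt_lapse hs)).congr_deriv ?_
  rw [integrand_eq_lapse hs]
  field_simp

end lapse

lemma integral_eq_lapsePrimitive_sub {a r : ℝ} (ha : 1 < a) (hr : 1 < r) :
    ∫ s in a..r, (s ^ 5)⁻¹ * (1 - 1 / s) ^ (-(3 : ℝ) / 2) =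
      lapsePrimitive (lapse r) - lapsePrimitive (lapse a) := by
  have hgt : ∀ s ∈ Set.uIcc a r, 1 < s := fun s hs => (lt_min ha hr).trans_le hs.1
  exact integral_eq_sub_of_hasDerivAt
    (fun s hs => hasDerivAt_lapsePrimitive_comp_lapse (hgt s hs))
    (ContinuousOn.intervalIntegrable fun s hs =>
      (continuousAt_integrand (hgt s hs)).continuousWithinAt)

theorem tendsto_integral_sub_boundary {r : ℝ} (hr : 1 < r) :
    Tendsto (fun a : ℝ => (∫ s in a..r, (s ^ 5)⁻¹ * (1 - 1 / s) ^ (-(3 : ℝ) / 2)) -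
        2 * a ^ (-(5 : ℝ) / 2) * (a - 1) ^ (-(1 : ℝ) / 2))
      (𝓝[>] 1) (𝓝 (lapsePrimitive (lapse r))) := by
  have hpoly : Tendsto (fun a => -12 * lapse a + 8 * lapse a ^ 3 - 12 / 5 * lapse a ^ 5)
      (𝓝[>] 1) (𝓝 0) := by
    have hQ : Continuous fun u : ℝ => -12 * u + 8 * u ^ 3 - 12 / 5 * u ^ 5 := by fun_prop
    exact (hQ.tendsto' 0 0 (by norm_num)).comp (tendsto_lapse_one.mono_left nhdsWithin_le_nhds)
  refine (sub_zero (lapsePrimitive (lapse r)) ▸ tendsto_const_nhds.sub hpoly).congr' ?_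
  filter_upwards [self_mem_nhdsWithin] with a ha
  rw [integral_eq_lapsePrimitive_sub ha hr, boundary_eq_lapse ha,
    ← lapsePrimitive_add_boundary (lapse_pos ha).ne']
  ring

/-- Existence and closed form of the limit `τ = lim_{a→1⁺} τ_a` on the
Schwarzschild metric with mass `m = 1/2`: for each `r > 1`, with
`t = (1 − 1/r)^{1/2}`,
`τ_a(r) = (α/8)·(1 − 1/r)^{1/2}·(∫_a^r s⁻⁵·(1 − 1/s)^{−3/2} ds − 2·a^{−5/2}·(a−1)^{−1/2})`
converges as `a → 1⁺` to `−(α/4)·(1 + 3t² − t⁴ + (1/5)t⁶)`. -/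
theorem schwarzschild_potential_limit
    (α r : ℝ) (hr : 1 < r) :
    Tendsto
      (fun a : ℝ =>
        (α / 8) * Real.sqrt (1 - 1 / r) *
          ((∫ s in a..r, (s ^ 5)⁻¹ * (1 - 1 / s) ^ (-(3 : ℝ) / 2)) -
            2 * a ^ (-(5 : ℝ) / 2) * (a - 1) ^ (-(1 : ℝ) / 2)))
      (nhdsWithin 1 (Set.Ioi 1))
      (nhds (-(α / 4) *
        (1 + 3 * Real.sqrt (1 - 1 / r) ^ 2 - Real.sqrt (1 - 1 / r) ^ 4 +
          (1 / 5) * Real.sqrt (1 - 1 / r) ^ 6))) := by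
  convert (tendsto_integral_sub_boundary hr).const_mul (α / 8 * √(1 - 1 / r)) using 2
  have ht : √(1 - 1 / r) ≠ 0 := (lapse_pos hr).ne'
  rw [lapsePrimitive, lapse]
  generalize √(1 - 1 / r) = t at ht ⊢
  field_simp
  ring
end

section
/- Fix α > 0 and define τ : [1,∞) → ℝ by τ(r) = −(α/4)·(1 + 3t² − t⁴ + (1/5)t⁶) with t = (1 − 1/r)^{1/2}. Then: (i) τ(1) = −α/4; (ii) (1 − 1/r)^{1/2}·τ'(r) → 0 as r → 1⁺; (iii) τ(r) < 0 for all r ≥ 1; (iv) τ is strictly decreasing on (1,∞); and (v) τ(r) → −4α/5 as r → ∞; in particular the limit at infinity exists and is a negative constant. -/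
/-!
In the variable `s = t² = 1 - 1/r` the potential is `-(α/4)·P(s)` with the cubic
`P(s) = 1 + 3s - s² + s³/5`. Its difference quotient `(15 - 5(a + b) + a² + ab + b²)/5` is at
least `4/3`, so `P` is strictly increasing, hence `P ≥ P(0) = 1` on `s ≥ 0`; as `s` is strictly
increasing in `r`, this gives negativity and monotonicity, while `τ(1) = -(α/4)·P(0)` and
`τ(∞) = -(α/4)·P(1)`. The potential is smooth in `r` near the horizon, so `t·τ'(r) → 0·τ'(1)`.
-/

open Filter Set Topology

namespace Schwarzschild

noncomputable def potentialPoly (s : ℝ) : ℝ := 1 + 3 * s - s ^ 2 + s ^ 3 / 5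

lemma potentialPoly_sqrt {s : ℝ} (hs : 0 ≤ s) :
    1 + 3 * √s ^ 2 - √s ^ 4 + 1 / 5 * √s ^ 6 = potentialPoly s := by
  rw [show √s ^ 4 = (√s ^ 2) ^ 2 by ring, show √s ^ 6 = (√s ^ 2) ^ 3 by ring, Real.sq_sqrt hs,
    potentialPoly]
  ring

lemma potentialPoly_strictMono : StrictMono potentialPoly := by
  intro a b hab
  have hquad : 0 < 15 - 5 * (a + b) + (a ^ 2 + a * b + b ^ 2) := by
    nlinarith [sq_nonneg (a - b), sq_nonneg (a + b - 10 / 3)]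
  unfold potentialPoly
  nlinarith [mul_pos (sub_pos.mpr hab) hquad]

lemma potentialPoly_pos {s : ℝ} (hs : 0 ≤ s) : 0 < potentialPoly s :=
  calc (0 : ℝ) < potentialPoly 0 := by norm_num [potentialPoly]
    _ ≤ potentialPoly s := potentialPoly_strictMono.monotone hs

lemma hasDerivAt_potentialPoly (s : ℝ) :
    HasDerivAt potentialPoly (3 - 2 * s + 3 / 5 * s ^ 2) s := by
  have h := ((((hasDerivAt_id' s).const_mul 3).const_add 1).sub (hasDerivAt_pow 2 s)).add
    ((hasDerivAt_pow 3 s).div_const 5)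
  exact h.congr_deriv (by norm_num; ring)

lemma continuous_potentialPoly : Continuous potentialPoly := by
  unfold potentialPoly; fun_prop

noncomputable def potential (α r : ℝ) : ℝ := -(α / 4) * potentialPoly (1 - 1 / r)

variable {α r : ℝ}

lemma one_sub_one_div_nonneg (hr : 1 ≤ r) : 0 ≤ 1 - 1 / r := by
  rw [sub_nonneg, div_le_one (by linarith)]
  exact hr

lemma potential_one : potential α 1 = -(α / 4) := by
  norm_num [potential, potentialPoly]

lemma potential_neg (hα : 0 < α) (hr : 1 ≤ r) : potential α r < 0 :=
  mul_neg_of_neg_of_pos (by linarith) (potentialPoly_pos (one_sub_one_div_nonneg hr))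

lemma potential_strictAntiOn (hα : 0 < α) : StrictAntiOn (potential α) (Ioi 0) := by
  intro a ha b hb hab
  have hs : 1 - 1 / a < 1 - 1 / b := by
    gcongr
  exact mul_lt_mul_of_neg_left (potentialPoly_strictMono hs) (by linarith)

lemma tendsto_potential_atTop : Tendsto (potential α) atTop (𝓝 (-(4 / 5) * α)) := by
  have hs : Tendsto (fun r : ℝ => 1 - 1 / r) atTop (𝓝 1) := by
    simpa using (tendsto_inv_atTop_zero (𝕜 := ℝ)).const_sub 1
  rw [show -(4 / 5) * α = -(α / 4) * potentialPoly 1 by norm_num [potentialPoly]; ring]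
  exact ((continuous_potentialPoly.tendsto 1).comp hs).const_mul _

lemma hasDerivAt_potential (hr : r ≠ 0) :
    HasDerivAt (potential α)
      (-(α / 4) * ((3 - 2 * (1 - 1 / r) + 3 / 5 * (1 - 1 / r) ^ 2) * (1 / r ^ 2))) r := by
  have hs : HasDerivAt (fun x : ℝ => 1 - 1 / x) (1 / r ^ 2) r := by
    simpa [one_div] using (hasDerivAt_inv hr).const_sub 1
  exact ((hasDerivAt_potentialPoly _).comp r hs).const_mul _

lemma continuousAt_deriv_potential : ContinuousAt (deriv (potential α)) 1 := by
  have hderiv : (fun r => -(α / 4) * ((3 - 2 * (1 - 1 / r) + 3 / 5 * (1 - 1 / r) ^ 2) *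
      (1 / r ^ 2))) =ᶠ[𝓝 1] deriv (potential α) := by
    filter_upwards [eventually_ne_nhds one_ne_zero] with r hr
    exact (hasDerivAt_potential hr).deriv.symm
  exact ContinuousAt.congr (by fun_prop (disch := norm_num)) hderiv

lemma tendsto_sqrt_mul_deriv_potential :
    Tendsto (fun r => √(1 - 1 / r) * deriv (potential α) r) (𝓝 1) (𝓝 0) := by
  have hsqrt : ContinuousAt (fun r : ℝ => √(1 - 1 / r)) 1 := by fun_prop (disch := norm_num)
  simpa using hsqrt.tendsto.mul continuousAt_deriv_potential.tendsto

end Schwarzschild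

open Schwarzschild in
/-- Properties of the Schwarzschild ℛ²ₛ-potential (mass `m = 1/2`): for `α > 0` and
`τ(r) = −(α/4)·(1 + 3t² − t⁴ + (1/5)t⁶)` with `t = (1 − 1/r)^{1/2}` on `[1,∞)`:
(i) `τ(1) = −α/4`; (ii) `(1 − 1/r)^{1/2}·τ'(r) → 0` as `r → 1⁺`; (iii) `τ < 0` on
`[1,∞)`; (iv) `τ` is strictly decreasing on `(1,∞)`; (v) `τ(r) → −4α/5` as `r → ∞`. -/
theorem schwarzschild_potential_properties
    (α : ℝ) (hα : 0 < α) (tau : ℝ → ℝ)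
    (htau : ∀ r : ℝ, 1 ≤ r → tau r =
      -(α / 4) * (1 + 3 * Real.sqrt (1 - 1 / r) ^ 2 - Real.sqrt (1 - 1 / r) ^ 4 +
        (1 / 5) * Real.sqrt (1 - 1 / r) ^ 6)) :
    tau 1 = -(α / 4) ∧
    Tendsto (fun r : ℝ => Real.sqrt (1 - 1 / r) * deriv tau r)
      (nhdsWithin 1 (Set.Ioi 1)) (nhds 0) ∧
    (∀ r : ℝ, 1 ≤ r → tau r < 0) ∧
    StrictAntiOn tau (Set.Ioi 1) ∧
    Tendsto tau atTop (nhds (-(4 / 5) * α)) := by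
  have heq : EqOn (potential α) tau (Ici 1) := fun r hr => by
    rw [htau r hr, potentialPoly_sqrt (one_sub_one_div_nonneg hr), potential]
  have hderiv : ∀ r ∈ Ioi (1 : ℝ), deriv (potential α) r = deriv tau r := fun r hr =>
    (heq.eventuallyEq_of_mem (Ici_mem_nhds hr)).deriv_eq
  refine ⟨?_, ?_, fun r hr => heq hr ▸ potential_neg hα hr, ?_, ?_⟩
  · exact heq self_mem_Ici ▸ potential_one
  · exact (tendsto_sqrt_mul_deriv_potential.mono_left nhdsWithin_le_nhds).congr'
      (eventually_nhdsWithin_of_forall fun r hr => by rw [hderiv r hr])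
  · exact ((potential_strictAntiOn hα).mono (Ioi_subset_Ioi zero_le_one)).congr
      (heq.mono Ioi_subset_Ici_self)
  · exact tendsto_potential_atTop.congr' (heq.eventuallyEq_of_mem (Ici_mem_atTop 1))
end
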